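/- arXiv:2309.07049 — 3 statements merged into one kernel-verified Lean document; each statement's English description precedes it below -/
import Mathlib

section
/- Let a < b, let C : ℝ² → ℝ be a prescribed boundary function, and g : ℝ² → ℝ arbitrary. Define the TFC constrained expression u = g − T_Ω g + T_Ω C, where T_Ω = T¹ − T² is the 2D TFC operator defined via the linear switching functions φ. Then u(x) = C(x) for every x on the boundary of [a,b]² (i.e., whenever x₁ ∈ {a,b} or x₂ ∈ {a,b} with the other coordinate in [a,b]). -/
/-! On an edge of the square the operator `T_Ω = T¹ − T²` reproduces any function: there one
switching function equals `1` and the other `0`, so `T¹ f` is `f` plus the linear interpolation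
of `f` along the edge, and `T²` is exactly that interpolation of the corner values. Hence
`T_Ω g = g` and `T_Ω C = C` on the boundary, and `u = g − g + C = C` there. -/

noncomputable def T1 (a b : ℝ) (f : ℝ → ℝ → ℝ) (x₁ x₂ : ℝ) : ℝ :=
  ((b - x₁) / (b - a)) * f a x₂ + ((x₁ - a) / (b - a)) * f b x₂
    + ((b - x₂) / (b - a)) * f x₁ a + ((x₂ - a) / (b - a)) * f x₁ b

noncomputable def T2 (a b : ℝ) (f : ℝ → ℝ → ℝ) (x₁ x₂ : ℝ) : ℝ :=
  ((b - x₁) * (b - x₂) / (b - a) ^ 2) * f a a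
    + ((b - x₁) * (x₂ - a) / (b - a) ^ 2) * f a b
    + ((x₁ - a) * (b - x₂) / (b - a) ^ 2) * f b a
    + ((x₁ - a) * (x₂ - a) / (b - a) ^ 2) * f b b

section

variable {a b : ℝ}

theorem T1_flip (f : ℝ → ℝ → ℝ) (x₁ x₂ : ℝ) : T1 a b (flip f) x₂ x₁ = T1 a b f x₁ x₂ := by
  simp only [T1, flip]
  ring

theorem T2_flip (f : ℝ → ℝ → ℝ) (x₁ x₂ : ℝ) : T2 a b (flip f) x₂ x₁ = T2 a b f x₁ x₂ := by
  simp only [T2, flip]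
  ring

theorem T1_sub_T2_left (hab : a ≠ b) (f : ℝ → ℝ → ℝ) (x₂ : ℝ) :
    T1 a b f a x₂ - T2 a b f a x₂ = f a x₂ := by
  have : b - a ≠ 0 := sub_ne_zero.mpr hab.symm
  simp only [T1, T2]
  field_simp
  ring

theorem T1_sub_T2_right (hab : a ≠ b) (f : ℝ → ℝ → ℝ) (x₂ : ℝ) :
    T1 a b f b x₂ - T2 a b f b x₂ = f b x₂ := by
  have : b - a ≠ 0 := sub_ne_zero.mpr hab.symm
  simp only [T1, T2]
  field_simp
  ring

theorem T1_sub_T2_of_fst_mem (hab : a ≠ b) (f : ℝ → ℝ → ℝ) {x₁ : ℝ} (x₂ : ℝ)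
    (h : x₁ = a ∨ x₁ = b) : T1 a b f x₁ x₂ - T2 a b f x₁ x₂ = f x₁ x₂ := by
  rcases h with rfl | rfl
  · exact T1_sub_T2_left hab f x₂
  · exact T1_sub_T2_right hab f x₂

theorem T1_sub_T2_of_snd_mem (hab : a ≠ b) (f : ℝ → ℝ → ℝ) (x₁ : ℝ) {x₂ : ℝ}
    (h : x₂ = a ∨ x₂ = b) : T1 a b f x₁ x₂ - T2 a b f x₁ x₂ = f x₁ x₂ := by
  rw [← T1_flip, ← T2_flip]
  exact T1_sub_T2_of_fst_mem hab (flip f) x₁ h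

end

/-- The TFC constrained expression u = g − T_Ω g + T_Ω C equals C on the boundary of
[a,b]², for an arbitrary free function g. -/
theorem stmt_4 (a b : ℝ) (hab : a < b) (C g : ℝ → ℝ → ℝ) :
    ∀ x₁ x₂ : ℝ,
      (((x₁ = a ∨ x₁ = b) ∧ x₂ ∈ Set.Icc a b) ∨
       ((x₂ = a ∨ x₂ = b) ∧ x₁ ∈ Set.Icc a b)) →
      g x₁ x₂ - (T1 a b g x₁ x₂ - T2 a b g x₁ x₂)
        + (T1 a b C x₁ x₂ - T2 a b C x₁ x₂) = C x₁ x₂ := by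
  intro x₁ x₂ h
  have reproduces : ∀ f : ℝ → ℝ → ℝ, T1 a b f x₁ x₂ - T2 a b f x₁ x₂ = f x₁ x₂ := by
    rcases h with ⟨h₁, -⟩ | ⟨h₂, -⟩
    · exact fun f ↦ T1_sub_T2_of_fst_mem hab.ne f x₂ h₁
    · exact fun f ↦ T1_sub_T2_of_snd_mem hab.ne f x₁ h₂
  rw [reproduces g, reproduces C]
  ring
end

section
/- Let a < b and let A f(x₁,x₂) = ((b−x₁)/(b−a))f(a,x₂) + ((x₁−a)/(b−a))f(b,x₂) + ((b−x₂)/(b−a))f(x₁,a) + ((x₂−a)/(b−a))f(x₁,b) be the 2D A-TFC (first-order truncated TFC) operator. For functions C, g : ℝ² → ℝ define u = g − A g + A C. Then for every x₁ ∈ ℝ, u(x₁, a) − C(x₁, a) = (C(a,a) − g(a,a))·(b−x₁)/(b−a) + (C(b,a) − g(b,a))·(x₁−a)/(b−a). -/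
/-- The 2D A-TFC operator (first-order truncation of the TFC operator). -/
noncomputable def ATFC2 (a b : ℝ) (f : ℝ → ℝ → ℝ) (x₁ x₂ : ℝ) : ℝ :=
  ((b - x₁) / (b - a)) * f a x₂ + ((x₁ - a) / (b - a)) * f b x₂
    + ((b - x₂) / (b - a)) * f x₁ a + ((x₂ - a) / (b - a)) * f x₁ b

theorem ATFC2_apply_lower_edge {a b : ℝ} (hab : a ≠ b) (f : ℝ → ℝ → ℝ) (x₁ : ℝ) :
    ATFC2 a b f x₁ a
      = (b - x₁) / (b - a) * f a a + (x₁ - a) / (b - a) * f b a + f x₁ a := by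
  have hba : b - a ≠ 0 := sub_ne_zero.mpr hab.symm
  simp only [ATFC2, div_self hba, sub_self, zero_div, one_mul, zero_mul, add_zero]

/-- Boundary residual of the A-TFC constrained expression u = g − A g + A C on the edge
x₂ = a. -/
theorem stmt_5 (a b : ℝ) (hab : a < b) (C g : ℝ → ℝ → ℝ) :
    ∀ x₁ : ℝ,
      (g x₁ a - ATFC2 a b g x₁ a + ATFC2 a b C x₁ a) - C x₁ a
        = (C a a - g a a) * ((b - x₁) / (b - a))
          + (C b a - g b a) * ((x₁ - a) / (b - a)) := by
  intro x₁
  rw [ATFC2_apply_lower_edge hab.ne, ATFC2_apply_lower_edge hab.ne]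
  ring
end

section
/- Let a < b and let A be the 2D A-TFC operator of the previous context. For C, g : ℝ² → ℝ define u = g − A g + A C. Then u(x) = C(x) for all x on the boundary of [a,b]² if and only if g agrees with C at the four corners: g(a,a) = C(a,a), g(a,b) = C(a,b), g(b,a) = C(b,a), and g(b,b) = C(b,b). -/
/-!
Since `A` is linear, `u - C = h - A h` with `h = g - C`. On an edge of the square one of the two
interpolations in `A h` reproduces `h` exactly, so `h - A h` is minus the linear interpolation of
`h` between the two corners of that edge. At a corner this is `-h` itself, so the residual vanishing
on the boundary forces `h = 0` at the corners, and conversely vanishing corner values make every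
edge interpolation zero.
-/

section ATFC2

variable {a b : ℝ}

theorem ATFC2_sub (f g : ℝ → ℝ → ℝ) (x₁ x₂ : ℝ) :
    ATFC2 a b (f - g) x₁ x₂ = ATFC2 a b f x₁ x₂ - ATFC2 a b g x₁ x₂ := by
  simp only [ATFC2, Pi.sub_apply]
  ring

theorem self_sub_ATFC2_of_fst_endpoint (hab : a ≠ b) (f : ℝ → ℝ → ℝ) {x₁ : ℝ}
    (hx₁ : x₁ = a ∨ x₁ = b) (x₂ : ℝ) :
    f x₁ x₂ - ATFC2 a b f x₁ x₂ =
      -((b - x₂) / (b - a) * f x₁ a + (x₂ - a) / (b - a) * f x₁ b) := by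
  have hba : b - a ≠ 0 := sub_ne_zero.mpr hab.symm
  rcases hx₁ with rfl | rfl <;>
    · simp only [ATFC2]
      field_simp
      ring

theorem self_sub_ATFC2_of_snd_endpoint (hab : a ≠ b) (f : ℝ → ℝ → ℝ) (x₁ : ℝ) {x₂ : ℝ}
    (hx₂ : x₂ = a ∨ x₂ = b) :
    f x₁ x₂ - ATFC2 a b f x₁ x₂ =
      -((b - x₁) / (b - a) * f a x₂ + (x₁ - a) / (b - a) * f b x₂) := by
  have hba : b - a ≠ 0 := sub_ne_zero.mpr hab.symm
  rcases hx₂ with rfl | rfl <;>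
    · simp only [ATFC2]
      field_simp
      ring

theorem self_sub_ATFC2_of_corner (hab : a ≠ b) (f : ℝ → ℝ → ℝ) {x₁ x₂ : ℝ}
    (hx₁ : x₁ = a ∨ x₁ = b) (hx₂ : x₂ = a ∨ x₂ = b) :
    f x₁ x₂ - ATFC2 a b f x₁ x₂ = -f x₁ x₂ := by
  have hba : b - a ≠ 0 := sub_ne_zero.mpr hab.symm
  rw [self_sub_ATFC2_of_fst_endpoint hab f hx₁]
  rcases hx₂ with rfl | rfl <;> simp [div_self hba]

end ATFC2

/-- The A-TFC constrained expression u = g − A g + A C equals C on the boundary of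
[a,b]² if and only if g agrees with C at the four corners. -/
theorem stmt_6 (a b : ℝ) (hab : a < b) (C g : ℝ → ℝ → ℝ) :
    (∀ x₁ x₂ : ℝ,
        (((x₁ = a ∨ x₁ = b) ∧ x₂ ∈ Set.Icc a b) ∨
         ((x₂ = a ∨ x₂ = b) ∧ x₁ ∈ Set.Icc a b)) →
        g x₁ x₂ - ATFC2 a b g x₁ x₂ + ATFC2 a b C x₁ x₂ = C x₁ x₂) ↔
    (g a a = C a a ∧ g a b = C a b ∧ g b a = C b a ∧ g b b = C b b) := by
  have residual (x₁ x₂ : ℝ) :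
      g x₁ x₂ - ATFC2 a b g x₁ x₂ + ATFC2 a b C x₁ x₂ = C x₁ x₂ ↔
        (g - C) x₁ x₂ - ATFC2 a b (g - C) x₁ x₂ = 0 := by
    rw [ATFC2_sub]
    simp only [Pi.sub_apply]
    constructor <;> intro h <;> linarith
  simp_rw [residual]
  have hne := hab.ne
  constructor
  · intro h
    have corner {x₁ x₂ : ℝ} (hx₁ : x₁ = a ∨ x₁ = b) (hx₂ : x₂ = a ∨ x₂ = b) :
        g x₁ x₂ = C x₁ x₂ := by
      have hx₂_mem : x₂ ∈ Set.Icc a b := by rcases hx₂ with rfl | rfl <;> simp [hab.le]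
      have := h x₁ x₂ (Or.inl ⟨hx₁, hx₂_mem⟩)
      rw [self_sub_ATFC2_of_corner hne _ hx₁ hx₂] at this
      simp only [Pi.sub_apply] at this
      linarith
    exact ⟨corner (.inl rfl) (.inl rfl), corner (.inl rfl) (.inr rfl),
      corner (.inr rfl) (.inl rfl), corner (.inr rfl) (.inr rfl)⟩
  · rintro ⟨haa, hab', hba, hbb⟩ x₁ x₂ (⟨hx₁, -⟩ | ⟨hx₂, -⟩)
    · rw [self_sub_ATFC2_of_fst_endpoint hne _ hx₁]
      rcases hx₁ with rfl | rfl <;> simp [*]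
    · rw [self_sub_ATFC2_of_snd_endpoint hne _ _ hx₂]
      rcases hx₂ with rfl | rfl <;> simp [*]
end
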